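/- Every invertible n×n real matrix g can be written as g = u·d·k, where u is upper unitriangular, d is diagonal with strictly positive diagonal entries, and k is orthogonal. -/

import Mathlib

/-!
Orthonormalize the rows of `g` by Gram–Schmidt, taken from the last row to the first; the
resulting orthonormal rows form `k`. Since row `i` of `g` lies in the span of rows `i, i+1, …` of
`k`, the coefficient matrix `g * kᵀ` is upper triangular, and its diagonal entries are the norms
of the (nonzero) Gram–Schmidt vectors, hence positive. Dividing each column by its diagonal entry
splits it as `u * diagonal f`. Running Gram–Schmidt in reverse is Gram–Schmidt for the order of
`(Fin n)ᵒᵈ`, where lower triangular means upper triangular for `Fin n`.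
-/

open Matrix

def UniUpper {k : ℕ} (u : Matrix (Fin k) (Fin k) ℝ) : Prop :=
  (∀ i j : Fin k, j < i → u i j = 0) ∧ (∀ i : Fin k, u i i = 1)

namespace InnerProductSpace

variable {𝕜 E ι : Type*} [RCLike 𝕜] [NormedAddCommGroup E] [InnerProductSpace 𝕜 E]
  [LinearOrder ι] [LocallyFiniteOrderBot ι] [WellFoundedLT ι]

theorem inner_gramSchmidt_self (f : ι → E) (i : ι) :
    inner 𝕜 (gramSchmidt 𝕜 f i) (f i) = (‖gramSchmidt 𝕜 f i‖ : 𝕜) ^ 2 := by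
  conv_lhs => rw [gramSchmidt_def'' 𝕜 f i]
  rw [inner_add_right, inner_self_eq_norm_sq_to_K, add_eq_left, inner_sum]
  refine Finset.sum_eq_zero fun j hj => ?_
  rw [inner_smul_right, gramSchmidt_orthogonal 𝕜 f (Finset.mem_Iio.1 hj).ne', mul_zero]

theorem inner_gramSchmidtNormed_self (f : ι → E) (i : ι) :
    inner 𝕜 (gramSchmidtNormed 𝕜 f i) (f i) = ‖gramSchmidt 𝕜 f i‖ := by
  rw [gramSchmidtNormed, inner_smul_left, inner_gramSchmidt_self, map_inv₀, RCLike.conj_ofReal]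
  rcases eq_or_ne (gramSchmidt 𝕜 f i) 0 with h | h
  · simp [h]
  · have : (‖gramSchmidt 𝕜 f i‖ : 𝕜) ≠ 0 := by simpa using h
    rw [sq, inv_mul_cancel_left₀ this]

theorem inner_gramSchmidtNormed_eq_zero_of_lt (f : ι → E) {i j : ι} (hij : i < j) :
    inner 𝕜 (gramSchmidtNormed 𝕜 f j) (f i) = 0 := by
  rw [gramSchmidtNormed, inner_smul_left, gramSchmidt_inv_triangular 𝕜 f hij, mul_zero]

end InnerProductSpace

open InnerProductSpace

namespace Matrix

variable {ι : Type*} [Fintype ι] [DecidableEq ι]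

theorem transpose_mul_self_eq_one_of_orthonormal {k : Matrix ι ι ℝ}
    (hk : Orthonormal ℝ fun i => WithLp.toLp 2 (k i)) : kᵀ * k = 1 := by
  rw [mul_eq_one_comm]
  ext i j
  have := orthonormal_iff_ite.1 hk j i
  rw [EuclideanSpace.inner_toLp_toLp] at this
  simpa [mul_apply, one_apply, dotProduct, eq_comm] using this

theorem linearIndependent_toLp_rows {g : Matrix ι ι ℝ} (hg : IsUnit g.det) :
    LinearIndependent ℝ fun i => WithLp.toLp 2 (g i) :=
  (linearIndependent_rows_iff_isUnit.2 ((isUnit_iff_isUnit_det g).2 hg)).map'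
    (WithLp.linearEquiv 2 ℝ (ι → ℝ)).symm.toLinearMap (LinearEquiv.ker _)

variable [LinearOrder ι] [LocallyFiniteOrderBot ι] [WellFoundedLT ι]

theorem exists_isLowerTriangular_mul_orthogonal (g : Matrix ι ι ℝ) (hg : IsUnit g.det) :
    ∃ L k : Matrix ι ι ℝ, L.IsLowerTriangular ∧ (∀ i, 0 < L i i) ∧ kᵀ * k = 1 ∧ g = L * k := by
  set v : ι → EuclideanSpace ℝ ι := fun i => WithLp.toLp 2 (g i)
  have hv : LinearIndependent ℝ v := linearIndependent_toLp_rows hg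
  set k : Matrix ι ι ℝ := fun j => WithLp.ofLp (gramSchmidtNormed ℝ v j)
  have hk : kᵀ * k = 1 :=
    transpose_mul_self_eq_one_of_orthonormal (gramSchmidtNormed_orthonormal hv)
  have hL : ∀ i j, (g * kᵀ) i j = inner ℝ (gramSchmidtNormed ℝ v j) (v i) := fun _ _ => rfl
  refine ⟨g * kᵀ, k, fun i j hij => ?_, fun i => ?_, hk, ?_⟩
  · rw [hL]
    exact inner_gramSchmidtNormed_eq_zero_of_lt v hij
  · rw [hL, inner_gramSchmidtNormed_self]
    exact norm_pos_iff.2 (gramSchmidt_ne_zero i hv)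
  · rw [Matrix.mul_assoc, hk, Matrix.mul_one]

end Matrix

theorem exists_uniUpper_mul_diagonal {n : ℕ} {R : Matrix (Fin n) (Fin n) ℝ}
    (hR : R.IsUpperTriangular) (hdiag : ∀ i, 0 < R i i) :
    ∃ (u : Matrix (Fin n) (Fin n) ℝ) (f : Fin n → ℝ),
      UniUpper u ∧ (∀ i, 0 < f i) ∧ R = u * diagonal f := by
  refine ⟨R * diagonal fun i => (R i i)⁻¹, fun i => R i i,
    ⟨fun i j hij => ?_, fun i => ?_⟩, hdiag, ?_⟩
  · rw [mul_diagonal, hR hij, zero_mul]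
  · rw [mul_diagonal, mul_inv_cancel₀ (hdiag i).ne']
  · rw [Matrix.mul_assoc, diagonal_mul_diagonal]
    simp [inv_mul_cancel₀ (hdiag _).ne']

theorem stmt17 {n : ℕ} (g : Matrix (Fin n) (Fin n) ℝ) (hg : IsUnit g.det) :
    ∃ (u k : Matrix (Fin n) (Fin n) ℝ) (f : Fin n → ℝ),
      UniUpper u ∧ (∀ i, 0 < f i) ∧ kᵀ * k = 1 ∧ g = u * Matrix.diagonal f * k := by
  obtain ⟨R, k, hR, hRdiag, hk, hgRk⟩ :=
    exists_isLowerTriangular_mul_orthogonal (ι := (Fin n)ᵒᵈ) g hg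
  obtain ⟨u, f, hu, hf, hRuf⟩ := exists_uniUpper_mul_diagonal (fun i j hij => hR hij) hRdiag
  exact ⟨u, k, f, hu, hf, hk, hgRk.trans (congrArg (· * k) hRuf)⟩
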